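/- The canonical structure ⟨W_can, R_can, {v_Δ}_{Δ∈W_can}⟩ is a swap Kripke model for DmbC (in particular, R_can is serial and each v_Δ satisfies all the swap-valuation conditions), and for every formula φ and every Δ ∈ W_can: v_Δ(φ) ∈ D if and only if φ ∈ Δ. -/

import Mathlib

/-- Formulas over the signature Σ = {∧, ∨, →, ¬, ∘, O}, with countably many
propositional variables. -/
inductive Form : Type
  | var : ℕ → Form
  | and : Form → Form → Form
  | or : Form → Form → Form
  | imp : Form → Form → Form
  | neg : Form → Form
  | circ : Form → Form
  | obl : Form → Form

namespace Form
/-- ⊥_α := (α ∧ ¬α) ∧ ∘α -/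
def bot (α : Form) : Form := (α.and α.neg).and α.circ
end Form

/-- Theorems of the Hilbert calculus DmbC: CPL⁺ axioms, (EM), (bc), (O-K), (O-E),
with rules Modus Ponens and O-necessitation. -/
inductive ThmDmbC : Form → Prop
  | A1 (α β : Form) : ThmDmbC (α.imp (β.imp α))
  | A2 (α β γ : Form) : ThmDmbC ((α.imp (β.imp γ)).imp ((α.imp β).imp (α.imp γ)))
  | A3 (α β : Form) : ThmDmbC (α.imp (β.imp (α.and β)))
  | A4 (α β : Form) : ThmDmbC ((α.and β).imp α)
  | A5 (α β : Form) : ThmDmbC ((α.and β).imp β)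
  | A6 (α β : Form) : ThmDmbC (α.imp (α.or β))
  | A7 (α β : Form) : ThmDmbC (β.imp (α.or β))
  | A8 (α β γ : Form) : ThmDmbC ((α.imp γ).imp ((β.imp γ).imp ((α.or β).imp γ)))
  | A9 (α β : Form) : ThmDmbC (((α.imp β).imp α).imp α)
  | EM (α : Form) : ThmDmbC (α.or α.neg)
  | bc (α β : Form) : ThmDmbC (α.circ.imp (α.imp (α.neg.imp β)))
  | OK (α β : Form) : ThmDmbC ((α.imp β).obl.imp (α.obl.imp β.obl))
  | OE (α : Form) : ThmDmbC (α.bot.obl.imp α.bot)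
  | mp {α β : Form} : ThmDmbC (α.imp β) → ThmDmbC α → ThmDmbC β
  | nec {α : Form} : ThmDmbC α → ThmDmbC α.obl

/-- conj γ [γ₂,…,γ_k] = γ ∧ γ₂ ∧ … ∧ γ_k -/
def conj (γ : Form) : List Form → Form
  | [] => γ
  | δ :: l => γ.and (conj δ l)

/-- Γ ⊢_DmbC φ iff ⊢ φ or ⊢ (γ₁ ∧ … ∧ γ_k) → φ for some γ₁,…,γ_k ∈ Γ, k ≥ 1. -/
def DerivDmbC (Γ : Set Form) (φ : Form) : Prop :=
  ThmDmbC φ ∨ ∃ (γ : Form) (l : List Form),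
    (∀ δ ∈ γ :: l, δ ∈ Γ) ∧ ThmDmbC ((conj γ l).imp φ)

/-- The three snapshots T = (1,0), t = (1,1), F = (0,1). -/
inductive SV : Type
  | T | t | F
deriving DecidableEq

/-- First coordinate of a snapshot. -/
def SV.p1 : SV → Bool
  | .T => true | .t => true | .F => false

/-- Second coordinate of a snapshot. -/
def SV.p2 : SV → Bool
  | .T => false | .t => true | .F => true

/-- Designated values: D = {T, t}, i.e. first coordinate is 1. -/
def SV.desig (a : SV) : Prop := a.p1 = true

/-- Swap Kripke model conditions for DmbC on a serial frame (W,R) with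
valuations v_w : Form → SV. -/
structure IsModelDmbC {W : Type} (R : W → W → Prop) (v : W → Form → SV) : Prop where
  serial : ∀ w, ∃ w', R w w'
  and_ : ∀ w α β, (v w (α.and β)).p1 = ((v w α).p1 && (v w β).p1)
  or_ : ∀ w α β, (v w (α.or β)).p1 = ((v w α).p1 || (v w β).p1)
  imp_ : ∀ w α β, (v w (α.imp β)).p1 = (!(v w α).p1 || (v w β).p1)
  neg_ : ∀ w α, (v w α.neg).p1 = (v w α).p2
  circ_ : ∀ w α, (v w α.circ).p1 ≤ !((v w α).p1 && (v w α).p2)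
  obl_ : ∀ w α, ((v w α.obl).p1 = true ↔ ∀ w', R w w' → (v w' α).p1 = true)

/-- Γ ⊨_DmbC φ : semantic consequence over all swap Kripke models for DmbC. -/
def SemDmbC (Γ : Set Form) (φ : Form) : Prop :=
  ∀ (W : Type) (R : W → W → Prop) (v : W → Form → SV), Nonempty W →
    IsModelDmbC R v → ∀ w : W, (∀ γ ∈ Γ, (v w γ).desig) → (v w φ).desig

/-- Δ is ψ-saturated in DmbC: Δ ⊬ ψ and Δ ∪ {φ} ⊢ ψ for every φ ∉ Δ. -/
def Saturated (Δ : Set Form) (ψ : Form) : Prop :=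
  ¬ DerivDmbC Δ ψ ∧ ∀ φ : Form, φ ∉ Δ → DerivDmbC (insert φ Δ) ψ

/-- The canonical worlds: the sets that are ψ-saturated in DmbC for some ψ. -/
def Wcan : Set (Set Form) := {Δ | ∃ ψ, Saturated Δ ψ}

/-- The canonical accessibility relation: Δ R_can Θ iff Den(Δ) ⊆ Θ. -/
def Rcan (Δ Θ : Set Form) : Prop := ∀ φ : Form, φ.obl ∈ Δ → φ ∈ Θ

/- The canonical valuation: v_Δ(α) = T if α ∈ Δ, ¬α ∉ Δ; t if α, ¬α ∈ Δ;
F if α ∉ Δ (in which case ¬α ∈ Δ for saturated Δ). -/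
open Classical in
noncomputable def canVal (Δ : Set Form) (α : Form) : SV :=
  if α ∈ Δ then (if α.neg ∈ Δ then SV.t else SV.T) else SV.F

/-!
Saturated sets behave like prime theories: they are deductively closed and decide
conjunctions, disjunctions and implications classically, contain `α ∨ ¬α`, and cannot
contain `∘α`, `α` and `¬α` together, which gives the swap conditions for `∧, ∨, →, ¬, ∘`.
For `O`, the set `Den(Δ)` proves `α` only if `Oα ∈ Δ` (necessitation and (O-K));
so if `Oα ∉ Δ`, Lindenbaum's lemma extends `Den(Δ)` to an `α`-saturated world without `α`.
Seriality is the special case `α = ⊥_ψ` for a `ψ`-saturated `Δ`: by (O-E), `O⊥_ψ ∈ Δ`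
would put `ψ` in `Δ`. Lindenbaum's lemma is Zorn's lemma, as derivations use finitely many
hypotheses; `W_can` is nonempty because a propositional variable is not a theorem.
-/

inductive Derivable (Γ : Set Form) : Form → Prop
  | assumption {φ : Form} : φ ∈ Γ → Derivable Γ φ
  | thm {φ : Form} : ThmDmbC φ → Derivable Γ φ
  | mp {φ χ : Form} : Derivable Γ (χ.imp φ) → Derivable Γ χ → Derivable Γ φ

theorem ThmDmbC.imp_self (α : Form) : ThmDmbC (α.imp α) :=
  .mp (.mp (.A2 α (α.imp α) α) (.A1 α (α.imp α))) (.A1 α α)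

namespace Derivable

variable {Γ Δ : Set Form} {α β φ ψ : Form}

theorem trans (hΓ : ∀ γ ∈ Γ, Derivable Δ γ) (h : Derivable Γ φ) : Derivable Δ φ := by
  induction h with
  | assumption hφ => exact hΓ _ hφ
  | thm hφ => exact .thm hφ
  | mp _ _ ih₁ ih₂ => exact .mp ih₁ ih₂

theorem mono (hΓΔ : Γ ⊆ Δ) (h : Derivable Γ φ) : Derivable Δ φ :=
  h.trans fun _ hγ => .assumption (hΓΔ hγ)

theorem deduction (h : Derivable (insert α Γ) φ) : Derivable Γ (α.imp φ) := by
  induction h with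
  | assumption hφ =>
    rcases hφ with rfl | hφ
    · exact .thm (.imp_self _)
    · exact .mp (.thm (.A1 _ _)) (.assumption hφ)
  | thm hφ => exact .mp (.thm (.A1 _ _)) (.thm hφ)
  | mp _ _ ih₁ ih₂ => exact .mp (.mp (.thm (.A2 _ _ _)) ih₁) ih₂

theorem of_imp_of_imp_imp (hα : Derivable Γ (α.imp ψ)) (hαβ : Derivable Γ ((α.imp β).imp ψ)) :
    Derivable Γ ψ := by
  have hΓ : Γ ⊆ insert (ψ.imp β) Γ := Set.subset_insert _ _
  have hβ : Derivable (insert α (insert (ψ.imp β) Γ)) β :=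
    .mp (.assumption (by simp))
      (.mp (hα.mono (hΓ.trans (Set.subset_insert _ _))) (.assumption (by simp)))
  have hψ : Derivable (insert (ψ.imp β) Γ) ψ := .mp (hαβ.mono hΓ) hβ.deduction
  exact .mp (.thm (.A9 ψ β)) hψ.deduction

theorem thmDmbC_of_empty (h : Derivable ∅ φ) : ThmDmbC φ := by
  induction h with
  | assumption hφ => exact absurd hφ (Set.notMem_empty _)
  | thm hφ => exact hφ
  | mp _ _ ih₁ ih₂ => exact ih₁.mp ih₂

theorem exists_list (h : Derivable Γ φ) :
    ∃ L : List Form, (∀ δ ∈ L, δ ∈ Γ) ∧ Derivable {δ | δ ∈ L} φ := by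
  induction h with
  | @assumption φ hφ => exact ⟨[φ], by simpa using hφ, .assumption (by simp)⟩
  | thm hφ => exact ⟨[], by simp, .thm hφ⟩
  | mp _ _ ih₁ ih₂ =>
    obtain ⟨L₁, hL₁, h₁⟩ := ih₁
    obtain ⟨L₂, hL₂, h₂⟩ := ih₂
    refine ⟨L₁ ++ L₂, fun δ hδ => (List.mem_append.1 hδ).elim (hL₁ δ) (hL₂ δ), .mp (h₁.mono ?_) (h₂.mono ?_)⟩ <;>
      intro δ <;> simp +contextual

theorem exists_mem_of_sUnion {c : Set (Set Form)} (hc : DirectedOn (· ⊆ ·) c) (hne : c.Nonempty)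
    (h : Derivable (⋃₀ c) φ) : ∃ s ∈ c, Derivable s φ := by
  induction h with
  | assumption hφ =>
    obtain ⟨s, hs, hφs⟩ := hφ
    exact ⟨s, hs, .assumption hφs⟩
  | thm hφ => exact ⟨hne.some, hne.some_mem, .thm hφ⟩
  | mp _ _ ih₁ ih₂ =>
    obtain ⟨s₁, hs₁, h₁⟩ := ih₁
    obtain ⟨s₂, hs₂, h₂⟩ := ih₂
    obtain ⟨s, hs, hs₁s, hs₂s⟩ := hc s₁ hs₁ s₂ hs₂
    exact ⟨s, hs, .mp (h₁.mono hs₁s) (h₂.mono hs₂s)⟩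

end Derivable

theorem derivable_conj {Γ : Set Form} {γ : Form} {l : List Form} (h : ∀ δ ∈ γ :: l, δ ∈ Γ) :
    Derivable Γ (conj γ l) := by
  induction l generalizing γ with
  | nil => exact .assumption (h γ (by simp))
  | cons δ l ih =>
    exact .mp (.mp (.thm (.A3 _ _)) (.assumption (h γ (by simp))))
      (ih fun κ hκ => h κ (List.mem_cons_of_mem γ hκ))

theorem derivable_of_mem_conj {γ δ : Form} {l : List Form} (hδ : δ ∈ γ :: l) :
    Derivable {conj γ l} δ := by
  induction l generalizing γ with
  | nil => exact .assumption (by simpa [conj] using hδ)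
  | cons κ l ih =>
    have hconj : Derivable {conj γ (κ :: l)} (γ.and (conj κ l)) := .assumption rfl
    rcases List.mem_cons.1 hδ with rfl | hδ
    · exact .mp (.thm (.A4 _ _)) hconj
    · exact (ih hδ).trans (by simpa using Derivable.mp (.thm (.A5 _ _)) hconj)

theorem derivDmbC_iff_derivable {Γ : Set Form} {φ : Form} : DerivDmbC Γ φ ↔ Derivable Γ φ := by
  constructor
  · rintro (h | ⟨γ, l, hl, h⟩)
    · exact .thm h
    · exact .mp (.thm h) (derivable_conj hl)
  · intro h
    obtain ⟨L, hL, h⟩ := h.exists_list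
    cases L with
    | nil => exact .inl (Derivable.thmDmbC_of_empty (by simpa using h))
    | cons γ l =>
      refine .inr ⟨γ, l, hL, Derivable.thmDmbC_of_empty (Derivable.deduction ?_)⟩
      exact h.trans fun δ hδ => by simpa using derivable_of_mem_conj hδ

namespace Saturated

variable {Δ : Set Form} {ψ α β : Form}

theorem not_derivable (h : Saturated Δ ψ) : ¬Derivable Δ ψ :=
  fun hψ => h.1 (derivDmbC_iff_derivable.2 hψ)

theorem derivable_imp_of_notMem (h : Saturated Δ ψ) (hα : α ∉ Δ) : Derivable Δ (α.imp ψ) :=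
  (derivDmbC_iff_derivable.1 (h.2 α hα)).deduction

theorem mem_of_derivable (h : Saturated Δ ψ) (hα : Derivable Δ α) : α ∈ Δ := by
  by_contra hαΔ
  exact h.not_derivable (.mp (h.derivable_imp_of_notMem hαΔ) hα)

theorem mem_of_thmDmbC (h : Saturated Δ ψ) (hα : ThmDmbC α) : α ∈ Δ :=
  h.mem_of_derivable (.thm hα)

theorem mem_of_imp_mem (h : Saturated Δ ψ) (hαβ : α.imp β ∈ Δ) (hα : α ∈ Δ) : β ∈ Δ :=
  h.mem_of_derivable (.mp (.assumption hαβ) (.assumption hα))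

theorem and_mem_iff (h : Saturated Δ ψ) : α.and β ∈ Δ ↔ α ∈ Δ ∧ β ∈ Δ :=
  ⟨fun hαβ => ⟨h.mem_of_imp_mem (h.mem_of_thmDmbC (.A4 α β)) hαβ,
      h.mem_of_imp_mem (h.mem_of_thmDmbC (.A5 α β)) hαβ⟩,
    fun ⟨hα, hβ⟩ => h.mem_of_imp_mem (h.mem_of_imp_mem (h.mem_of_thmDmbC (.A3 α β)) hα) hβ⟩

theorem or_mem_iff (h : Saturated Δ ψ) : α.or β ∈ Δ ↔ α ∈ Δ ∨ β ∈ Δ := by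
  refine ⟨fun hαβ => ?_, ?_⟩
  · by_contra! hnot
    have hcases : Derivable Δ ((α.or β).imp ψ) :=
      .mp (.mp (.thm (.A8 α β ψ)) (h.derivable_imp_of_notMem hnot.1))
        (h.derivable_imp_of_notMem hnot.2)
    exact h.not_derivable (.mp hcases (.assumption hαβ))
  · rintro (hα | hβ)
    · exact h.mem_of_imp_mem (h.mem_of_thmDmbC (.A6 α β)) hα
    · exact h.mem_of_imp_mem (h.mem_of_thmDmbC (.A7 α β)) hβ

theorem imp_mem_iff (h : Saturated Δ ψ) : α.imp β ∈ Δ ↔ α ∉ Δ ∨ β ∈ Δ := by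
  refine ⟨fun hαβ => or_iff_not_imp_left.2 fun hα => h.mem_of_imp_mem hαβ (not_not.1 hα), ?_⟩
  rintro (hα | hβ)
  · by_contra hαβ
    exact h.not_derivable (.of_imp_of_imp_imp (h.derivable_imp_of_notMem hα)
      (h.derivable_imp_of_notMem hαβ))
  · exact h.mem_of_imp_mem (h.mem_of_thmDmbC (.A1 β α)) hβ

theorem neg_mem_of_notMem (h : Saturated Δ ψ) (hα : α ∉ Δ) : α.neg ∈ Δ :=
  (h.or_mem_iff.1 (h.mem_of_thmDmbC (.EM α))).resolve_left hα

theorem circ_notMem (h : Saturated Δ ψ) (hα : α ∈ Δ) (hnα : α.neg ∈ Δ) : α.circ ∉ Δ :=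
  fun hcα => h.not_derivable (.assumption
    (h.mem_of_imp_mem (h.mem_of_imp_mem (h.mem_of_imp_mem (h.mem_of_thmDmbC (.bc α ψ)) hcα) hα)
      hnα))

theorem bot_obl_notMem (h : Saturated Δ ψ) : ψ.bot.obl ∉ Δ := fun hObot =>
  have hbot : ψ.bot ∈ Δ := h.mem_of_imp_mem (h.mem_of_thmDmbC (.OE ψ)) hObot
  h.not_derivable (.assumption (h.and_mem_iff.1 (h.and_mem_iff.1 hbot).1).1)

end Saturated

theorem obl_mem_of_derivable_den {Δ : Set Form} {α : Form} (hΔ : ∀ φ, Derivable Δ φ → φ ∈ Δ)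
    (h : Derivable {φ | φ.obl ∈ Δ} α) : α.obl ∈ Δ := by
  induction h with
  | assumption hφ => exact hφ
  | thm hφ => exact hΔ _ (.thm (.nec hφ))
  | mp _ _ ih₁ ih₂ => exact hΔ _ (.mp (.mp (.thm (.OK _ _)) (.assumption ih₁)) (.assumption ih₂))

theorem exists_saturated_superset {Γ : Set Form} {ψ : Form} (h : ¬Derivable Γ ψ) :
    ∃ Δ, Γ ⊆ Δ ∧ Saturated Δ ψ := by
  set S := {Δ | Γ ⊆ Δ ∧ ¬Derivable Δ ψ}
  have hchain : ∀ c ⊆ S, IsChain (· ⊆ ·) c → c.Nonempty → ∃ ub ∈ S, ∀ s ∈ c, s ⊆ ub := by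
    intro c hcS hc ⟨s₀, hs₀⟩
    refine ⟨⋃₀ c, ⟨(hcS hs₀).1.trans (Set.subset_sUnion_of_mem hs₀), fun hψ => ?_⟩,
      fun _ => Set.subset_sUnion_of_mem⟩
    obtain ⟨s, hs, hψs⟩ := hψ.exists_mem_of_sUnion hc.directedOn ⟨s₀, hs₀⟩
    exact (hcS hs).2 hψs
  obtain ⟨Δ, hΓΔ, hmax⟩ := zorn_subset_nonempty S hchain Γ ⟨subset_rfl, h⟩
  refine ⟨Δ, hΓΔ, fun hψ => hmax.prop.2 (derivDmbC_iff_derivable.1 hψ), fun φ hφ => ?_⟩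
  rw [derivDmbC_iff_derivable]
  by_contra hψ
  have hφΔ : insert φ Δ = Δ :=
    (hmax.eq_of_subset ⟨hΓΔ.trans (Set.subset_insert _ _), hψ⟩ (Set.subset_insert _ _)).symm
  exact hφ (hφΔ ▸ Set.mem_insert φ Δ)

theorem Saturated.exists_rcan_notMem {Δ : Set Form} {ψ α : Form} (hΔ : Saturated Δ ψ)
    (hα : α.obl ∉ Δ) : ∃ Θ ∈ Wcan, Rcan Δ Θ ∧ α ∉ Θ := by
  have hden : ¬Derivable {φ | φ.obl ∈ Δ} α :=
    fun hd => hα (obl_mem_of_derivable_den (fun _ => hΔ.mem_of_derivable) hd)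
  obtain ⟨Θ, hΘ, hsat⟩ := exists_saturated_superset hden
  exact ⟨Θ, ⟨α, hsat⟩, fun _ hφ => hΘ hφ, fun hαΘ => hsat.not_derivable (.assumption hαΘ)⟩

theorem Saturated.obl_mem_iff {Δ : Set Form} {ψ α : Form} (hΔ : Saturated Δ ψ) :
    α.obl ∈ Δ ↔ ∀ Θ ∈ Wcan, Rcan Δ Θ → α ∈ Θ := by
  refine ⟨fun hα _ _ hR => hR α hα, fun h => ?_⟩
  by_contra hα
  obtain ⟨Θ, hΘ, hR, hαΘ⟩ := hΔ.exists_rcan_notMem hα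
  exact hαΘ (h Θ hΘ hR)

def bval : Form → Bool
  | .var _ => false
  | .and a b => bval a && bval b
  | .or a b => bval a || bval b
  | .imp a b => !bval a || bval b
  | .neg a => !bval a
  | .circ _ => true
  | .obl a => bval a

theorem ThmDmbC.bval_eq_true {φ : Form} (h : ThmDmbC φ) : bval φ = true := by
  induction h with
  | mp _ _ ih₁ ih₂ => simp_all [bval]
  | nec _ ih => simpa [bval] using ih
  | _ => simp only [bval, Form.bot]; grind

theorem wcan_nonempty : Wcan.Nonempty := by
  have h : ¬Derivable ∅ (Form.var 0) := fun h => by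
    simpa [bval] using h.thmDmbC_of_empty.bval_eq_true
  obtain ⟨Δ, -, hΔ⟩ := exists_saturated_superset h
  exact ⟨Δ, _, hΔ⟩

theorem canVal_p1_eq_true {Δ : Set Form} {α : Form} : (canVal Δ α).p1 = true ↔ α ∈ Δ := by
  unfold canVal
  split_ifs <;> simp_all [SV.p1]

theorem canVal_p2_eq_true {Δ : Set Form} {α : Form} :
    (canVal Δ α).p2 = true ↔ α ∉ Δ ∨ α.neg ∈ Δ := by
  unfold canVal
  split_ifs <;> simp_all [SV.p2]

theorem isModelDmbC_canonical :
    IsModelDmbC (W := {Δ : Set Form // Δ ∈ Wcan})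
      (fun Δ Θ => Rcan Δ.1 Θ.1) (fun Δ α => canVal Δ.1 α) where
  serial Δ := by
    obtain ⟨ψ, hψ⟩ := Δ.2
    obtain ⟨Θ, hΘ, hR, -⟩ := hψ.exists_rcan_notMem hψ.bot_obl_notMem
    exact ⟨⟨Θ, hΘ⟩, hR⟩
  and_ Δ α β := by
    obtain ⟨ψ, hψ⟩ := Δ.2
    rw [Bool.eq_iff_iff]
    simp only [Bool.and_eq_true, canVal_p1_eq_true, hψ.and_mem_iff]
  or_ Δ α β := by
    obtain ⟨ψ, hψ⟩ := Δ.2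
    rw [Bool.eq_iff_iff]
    simp only [Bool.or_eq_true, canVal_p1_eq_true, hψ.or_mem_iff]
  imp_ Δ α β := by
    obtain ⟨ψ, hψ⟩ := Δ.2
    rw [Bool.eq_iff_iff]
    simp only [Bool.or_eq_true, Bool.not_eq_true', ← Bool.not_eq_true, canVal_p1_eq_true,
      hψ.imp_mem_iff]
  neg_ Δ α := by
    obtain ⟨ψ, hψ⟩ := Δ.2
    rw [Bool.eq_iff_iff]
    simp only [canVal_p1_eq_true, canVal_p2_eq_true]
    exact ⟨Or.inr, fun h => h.elim hψ.neg_mem_of_notMem id⟩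
  circ_ Δ α := by
    obtain ⟨ψ, hψ⟩ := Δ.2
    rw [Bool.le_iff_imp]
    simp only [Bool.not_eq_true', ← Bool.not_eq_true, Bool.and_eq_true, canVal_p1_eq_true,
      canVal_p2_eq_true]
    rintro hcα ⟨hα, hnα | hnα⟩
    exacts [hnα hα, hψ.circ_notMem hα hnα hcα]
  obl_ Δ α := by
    obtain ⟨ψ, hψ⟩ := Δ.2
    simp only [canVal_p1_eq_true, hψ.obl_mem_iff, Subtype.forall]

/-- The canonical structure ⟨W_can, R_can, {v_Δ}⟩ is a swap Kripke model for DmbC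
(with W_can nonempty), and satisfies the truth lemma: v_Δ(φ) ∈ D iff φ ∈ Δ. -/
theorem canonical_model_DmbC :
    Nonempty {Δ : Set Form // Δ ∈ Wcan} ∧
    IsModelDmbC (W := {Δ : Set Form // Δ ∈ Wcan})
      (fun Δ Θ => Rcan Δ.1 Θ.1) (fun Δ α => canVal Δ.1 α) ∧
    ∀ (Δ : {Δ : Set Form // Δ ∈ Wcan}) (φ : Form), ((canVal Δ.1 φ).desig ↔ φ ∈ Δ.1) :=
  ⟨wcan_nonempty.to_subtype, isModelDmbC_canonical, fun _ _ => canVal_p1_eq_true⟩
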